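/- Let V be a finite set of points of EuclideanSpace ℝ (Fin 3) with |V| ≥ 4 that is in general position (every subset of V with at most four elements is affinely independent). Then there exists a simple graph G on V such that: (a) the harmonic space Harm(G, incl) of G with the inclusion map of V into ℝ³ as position map has dimension exactly 6; and (b) for every edge e of G, the graph G' obtained from G by deleting the edge e satisfies Module.finrank ℝ Harm(G', incl) > 6. -/

import Mathlib

open scoped RealInnerProductSpace

def Harm {V : Type*} (G : SimpleGraph V) (p : V → EuclideanSpace ℝ (Fin 3)) :
    Submodule ℝ (V → EuclideanSpace ℝ (Fin 3)) where
  carrier := {x | ∀ ⦃i j : V⦄, G.Adj i j → ⟪p j - p i, x j - x i⟫ = 0}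
  add_mem' := by
    intro x y hx hy i j hij
    have h : (x + y) j - (x + y) i = (x j - x i) + (y j - y i) := by
      simp only [Pi.add_apply]; abel
    rw [h, inner_add_right, hx hij, hy hij, add_zero]
  zero_mem' := by
    intro i j hij
    simp
  smul_mem' := by
    intro c x hx i j hij
    have h : (c • x) j - (c • x) i = c • (x j - x i) := by
      simp only [Pi.smul_apply, smul_sub]
    rw [h, inner_smul_right, hx hij, mul_zero]

noncomputable section MinGraphAux

abbrev E3 := EuclideanSpace ℝ (Fin 3)

def cp (ω u : E3) : E3 := WithLp.toLp 2 fun i =>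
  ![ω 1 * u 2 - ω 2 * u 1, ω 2 * u 0 - ω 0 * u 2, ω 0 * u 1 - ω 1 * u 0] i

lemma ext3 {a b : E3} (h0 : a 0 = b 0) (h1 : a 1 = b 1) (h2 : a 2 = b 2) : a = b := by
  apply PiLp.ext; intro i; fin_cases i <;> assumption

lemma inner3 (u v : E3) : ⟪u, v⟫ = u 0 * v 0 + u 1 * v 1 + u 2 * v 2 := by
  simp [PiLp.inner_apply, Fin.sum_univ_three]; ring

lemma cp_add_left (ω ω' u : E3) : cp (ω + ω') u = cp ω u + cp ω' u := by
  apply ext3 <;> simp [cp] <;> ring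
lemma cp_smul_left (c : ℝ) (ω u : E3) : cp (c • ω) u = c • cp ω u := by
  apply ext3 <;> simp [cp] <;> ring
lemma cp_add_right (ω u v : E3) : cp ω (u + v) = cp ω u + cp ω v := by
  apply ext3 <;> simp [cp] <;> ring
lemma cp_smul_right (c : ℝ) (ω u : E3) : cp ω (c • u) = c • cp ω u := by
  apply ext3 <;> simp [cp] <;> ring
lemma cp_sub_right (ω u v : E3) : cp ω (u - v) = cp ω u - cp ω v := by
  apply ext3 <;> simp [cp] <;> ring
lemma inner_cp_self (ω d : E3) : ⟪d, cp ω d⟫ = 0 := by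
  rw [inner3]; simp [cp]; ring

/-- right cross product as a linear map -/
def cpl (ω : E3) : E3 →ₗ[ℝ] E3 where
  toFun := cp ω
  map_add' := cp_add_right ω
  map_smul' c u := by simp [cp_smul_right]

def Phi {V' : Type*} (p : V' → E3) : (E3 × E3) →ₗ[ℝ] (V' → E3) where
  toFun wb := fun v => cp wb.1 (p v) + wb.2
  map_add' a b := by
    funext v; show cp (a.1 + b.1) (p v) + (a.2 + b.2) = _
    rw [cp_add_left]; simp only [Pi.add_apply]; abel
  map_smul' c a := by
    funext v; show cp (c • a.1) (p v) + c • a.2 = _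
    rw [cp_smul_left]; simp only [Pi.smul_apply, smul_add, RingHom.id_apply]

lemma es_decomp (u : E3) :
    u = u 0 • EuclideanSpace.single 0 (1:ℝ) + u 1 • EuclideanSpace.single 1 (1:ℝ)
      + u 2 • EuclideanSpace.single 2 (1:ℝ) := by
  apply ext3 <;> simp [EuclideanSpace.single_apply]

lemma harm_antitone {V' : Type*} {G H : SimpleGraph V'} (h : H ≤ G)
    (p : V' → E3) : Harm G p ≤ Harm H p := by
  intro x hx i j hij
  exact hx (h hij)

section Main

variable (V : Finset E3)

lemma harm_top (hV : 4 ≤ V.card)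
    (hgen : ∀ S : Finset E3, S ⊆ V → S.card ≤ 4 →
      AffineIndependent ℝ (fun x : {y : E3 // y ∈ S} => x.1)) :
    Module.finrank ℝ (Harm (⊤ : SimpleGraph {x // x ∈ V}) (fun x => x.1)) = 6 := by
  classical
  obtain ⟨S, hSV, hS4⟩ := Finset.exists_subset_card_eq hV
  have hAI := hgen S hSV hS4.le
  set e : Fin 4 ≃ {y // y ∈ S} := (Finset.equivFinOfCardEq hS4).symm with he
  set p : Fin 4 → E3 := fun i => (e i).1 with hpdef
  have hp : AffineIndependent ℝ p := (affineIndependent_equiv e).2 hAI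
  have hpV : ∀ i, p i ∈ V := fun i => hSV (e i).2
  have li : LinearIndependent ℝ (fun i : {x : Fin 4 // x ≠ 0} => p i - p 0) := by
    have := (affineIndependent_iff_linearIndependent_vsub ℝ p 0).1 hp
    simpa [vsub_eq_sub] using this
  haveI : Nonempty {x : Fin 4 // x ≠ 0} := ⟨⟨1, by decide⟩⟩
  have hcard : Fintype.card {x : Fin 4 // x ≠ 0} = Module.finrank ℝ E3 := by
    rw [finrank_euclideanSpace_fin]; decide
  set B : Module.Basis {x : Fin 4 // x ≠ 0} ℝ E3 :=
    basisOfLinearIndependentOfCardEqFinrank li hcard with hB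
  have coeB : ∀ i, B i = p i - p 0 := fun i => by
    rw [hB]; exact congrFun (coe_basisOfLinearIndependentOfCardEqFinrank li hcard) i
  -- the subtype vertices
  set vi : Fin 4 → {x // x ∈ V} := fun i => ⟨p i, hpV i⟩ with hvi
  -- injectivity of Phi
  have hinj : Function.Injective (Phi (fun x : {x // x ∈ V} => x.1)) := by
    rw [injective_iff_map_eq_zero]
    rintro ⟨ω, b⟩ h
    have h' : ∀ v : {x // x ∈ V}, cp ω v.1 + b = 0 := fun v => congrFun h v
    have hq : ∀ i : {x : Fin 4 // x ≠ 0}, cpl ω (B i) = 0 := by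
      intro i
      have h1 := h' (vi i.1)
      have h0 := h' (vi 0)
      have : cp ω (p i.1) - cp ω (p 0) = 0 := by
        rw [show cp ω (p i.1) = -b from by linear_combination (norm := module) h1,
          show cp ω (p 0) = -b from by linear_combination (norm := module) h0]
        abel
      rw [coeB]
      show cp ω (p i.1 - p 0) = 0
      rw [cp_sub_right, this]
    have hall : cpl ω = 0 := B.ext fun i => by rw [hq i]; rfl
    have hω : ω = 0 := by
      have h0 := congrFun (congrArg (fun f : E3 →ₗ[ℝ] E3 => (f (EuclideanSpace.single 0 1)).ofLp) hall) 1
      have h1 := congrFun (congrArg (fun f : E3 →ₗ[ℝ] E3 => (f (EuclideanSpace.single 0 1)).ofLp) hall) 2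
      have h2 := congrFun (congrArg (fun f : E3 →ₗ[ℝ] E3 => (f (EuclideanSpace.single 1 1)).ofLp) hall) 2
      simp [cpl, cp, EuclideanSpace.single_apply] at h0 h1 h2
      apply ext3 <;> simp [h0, h1, h2]
    have hb : b = 0 := by
      have := h' (vi 0)
      rw [hω] at this
      simpa [cp] using by
        have : cp 0 (p 0) + b = 0 := this
        have hz : cp 0 (p 0) = 0 := by apply ext3 <;> simp [cp]
        rw [hz, zero_add] at this; exact this
    rw [hω, hb]; rfl
  -- range Phi = Harm ⊤
  have hrange : LinearMap.range (Phi (fun x : {x // x ∈ V} => x.1)) =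
      Harm (⊤ : SimpleGraph {x // x ∈ V}) (fun x => x.1) := by
    apply le_antisymm
    · rintro x ⟨⟨ω, b⟩, rfl⟩
      intro i j _
      show ⟪j.1 - i.1, (cp ω j.1 + b) - (cp ω i.1 + b)⟫ = 0
      have : (cp ω j.1 + b) - (cp ω i.1 + b) = cp ω (j.1 - i.1) := by
        rw [cp_sub_right]; abel
      rw [this, inner_cp_self]
    · intro x hx
      have hc : ∀ v w : {x // x ∈ V}, ⟪w.1 - v.1, x w - x v⟫ = 0 := by
        intro v w
        rcases eq_or_ne v w with rfl | hne
        · simp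
        · exact hx ((SimpleGraph.top_adj v w).2 hne)
      set v0 : {x // x ∈ V} := vi 0 with hv0
      set Q : {x // x ∈ V} → E3 := fun w => w.1 - p 0 with hQ
      set Y : {x // x ∈ V} → E3 := fun w => x w - x v0 with hY
      have hQY : ∀ w, ⟪Q w, Y w⟫ = 0 := fun w => hc v0 w
      have hsym : ∀ w w', ⟪Q w, Y w'⟫ + ⟪Q w', Y w⟫ = 0 := by
        intro w w'
        have h1 := hc w w'
        have h2 : w'.1 - w.1 = Q w' - Q w := by rw [hQ]; exact (sub_sub_sub_cancel_right _ _ _).symm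
        have h3 : x w' - x w = Y w' - Y w := by rw [hY]; exact (sub_sub_sub_cancel_right _ _ _).symm
        rw [h2, h3] at h1
        simp only [inner_sub_left, inner_sub_right] at h1
        have e1 := hQY w
        have e2 := hQY w'
        linarith
      have hQvi : ∀ i : {x : Fin 4 // x ≠ 0}, Q (vi i.1) = B i := fun i => by
        rw [coeB]
      set Bl : E3 →ₗ[ℝ] E3 := B.constr ℝ (fun i => Y (vi i.1)) with hBl
      have hBlB : ∀ i : {x : Fin 4 // x ≠ 0}, Bl (B i) = Y (vi i.1) := fun i =>
        B.constr_basis ℝ _ i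
      -- skewness
      have hsk : ∀ u w : E3, ⟪u, Bl w⟫ + ⟪w, Bl u⟫ = 0 := by
        set F : E3 →ₗ[ℝ] E3 →ₗ[ℝ] ℝ :=
          LinearMap.mk₂ ℝ (fun u w => ⟪u, Bl w⟫ + ⟪w, Bl u⟫)
            (fun a b w => by simp [inner_add_left, inner_add_right]; ring)
            (fun c a w => by simp [inner_smul_left, inner_smul_right]; ring)
            (fun a b w => by simp [inner_add_left, inner_add_right]; ring)
            (fun c a w => by simp [inner_smul_left, inner_smul_right]; ring) with hF
        have hF0 : F = 0 := by
          apply B.ext; intro i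
          apply B.ext; intro j
          show ⟪B i, Bl (B j)⟫ + ⟪B j, Bl (B i)⟫ = 0
          rw [hBlB, hBlB, ← hQvi, ← hQvi]
          exact hsym _ _
        intro u w
        have h1 : F u w = 0 := by rw [hF0]; simp
        rw [hF] at h1
        simpa using h1
      -- z = 0 criterion
      have hzero : ∀ z : E3, (∀ i, ⟪B i, z⟫ = 0) → z = 0 := by
        intro z hz
        have : (innerₗ E3 z) = 0 := by
          apply B.ext; intro i
          show ⟪z, B i⟫ = 0
          rw [real_inner_comm]; exact hz i
        have hzz : ⟪z, z⟫ = 0 := by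
          have := congrFun (congrArg DFunLike.coe this) z
          simpa using this
        exact inner_self_eq_zero.1 hzz
      have hBQ : ∀ w, Bl (Q w) = Y w := by
        intro w
        have key : ∀ i, ⟪B i, Bl (Q w) - Y w⟫ = 0 := by
          intro i
          have h1 : ⟪B i, Bl (Q w)⟫ = -⟪Q w, Bl (B i)⟫ := by
            have := hsk (B i) (Q w); linarith
          have h2 : ⟪B i, Y w⟫ = -⟪Q w, Y (vi i.1)⟫ := by
            have := hsym (vi i.1) w
            rw [hQvi] at this; linarith
          rw [inner_sub_right, h1, hBlB, h2]; ring
        have := hzero _ key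
        have h' : Bl (Q w) - Y w = 0 := this
        linear_combination (norm := module) h'
      -- extract ω
      set M : Fin 3 → Fin 3 → ℝ := fun i j => Bl (EuclideanSpace.single j 1) i with hM
      have hMsk : ∀ i j, M i j = - M j i := by
        intro i j
        have h1 : ⟪EuclideanSpace.single i (1:ℝ), Bl (EuclideanSpace.single j 1)⟫ = M i j := by
          simp [EuclideanSpace.inner_single_left, hM]
        have h2 : ⟪EuclideanSpace.single j (1:ℝ), Bl (EuclideanSpace.single i 1)⟫ = M j i := by
          simp [EuclideanSpace.inner_single_left, hM]
        have := hsk (EuclideanSpace.single i 1) (EuclideanSpace.single j 1)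
        rw [h1, h2] at this; linarith
      set ω : E3 := WithLp.toLp 2 (fun i => ![M 2 1, M 0 2, M 1 0] i) with hω
      have hMd : ∀ i, M i i = 0 := fun i => by have := hMsk i i; linarith
      have hcpBl : ∀ u, cp ω u = Bl u := by
        intro u
        have hu := es_decomp u
        have hBlu : Bl u = u 0 • Bl (EuclideanSpace.single 0 1) + u 1 • Bl (EuclideanSpace.single 1 1)
            + u 2 • Bl (EuclideanSpace.single 2 1) := by
          conv_lhs => rw [hu]
          simp [map_add, map_smul]
        have hB3 : ∀ k, Bl u k = u 0 * M k 0 + u 1 * M k 1 + u 2 * M k 2 := by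
          intro k
          rw [hBlu]
          simp only [PiLp.add_apply, PiLp.smul_apply, smul_eq_mul]; rfl
        apply ext3
        · show ω 1 * u 2 - ω 2 * u 1 = Bl u 0
          rw [hB3]
          show M 0 2 * u 2 - M 1 0 * u 1 = _
          rw [hMd 0, hMsk 0 1]; ring
        · show ω 2 * u 0 - ω 0 * u 2 = Bl u 1
          rw [hB3]
          show M 1 0 * u 0 - M 2 1 * u 2 = _
          rw [hMd 1, hMsk 1 2]; ring
        · show ω 0 * u 1 - ω 1 * u 0 = Bl u 2
          rw [hB3]
          show M 2 1 * u 1 - M 0 2 * u 0 = _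
          rw [hMd 2, hMsk 2 0]; ring
      refine ⟨(ω, x v0 - cp ω (p 0)), ?_⟩
      funext w
      show cp ω w.1 + (x v0 - cp ω (p 0)) = x w
      have h1 : x w = Y w + x v0 := by rw [hY]; module
      rw [h1, ← hBQ, ← hcpBl, hQ]
      show cp ω w.1 + (x v0 - cp ω (p 0)) = cp ω (w.1 - p 0) + x v0
      rw [cp_sub_right]; abel
  rw [← hrange, LinearMap.finrank_range_of_inj hinj]
  rw [Module.finrank_prod, finrank_euclideanSpace_fin]

end Main
end MinGraphAux

/-- For a finite point cloud of at least 4 points in general position in `ℝ³`, there is a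
(minimal) graph on the points whose harmonic space has dimension exactly `6`, and deleting
any edge yields a harmonic space of dimension greater than `6`. -/
theorem exists_minimal_graph (V : Finset (EuclideanSpace ℝ (Fin 3))) (hV : 4 ≤ V.card)
    (hgen : ∀ S : Finset (EuclideanSpace ℝ (Fin 3)), S ⊆ V → S.card ≤ 4 →
      AffineIndependent ℝ (fun x : {y : EuclideanSpace ℝ (Fin 3) // y ∈ S} => x.1)) :
    ∃ G : SimpleGraph {x // x ∈ V},
      Module.finrank ℝ (Harm G (fun x => x.1)) = 6 ∧
      ∀ e ∈ G.edgeSet,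
        6 < Module.finrank ℝ
          (Harm (G.deleteEdges {e}) (fun x => x.1)) := by
  classical
  have htop := harm_top V hV hgen
  have hex : ∃ n, ∃ G : SimpleGraph {x // x ∈ V},
      Module.finrank ℝ (Harm G (fun x => x.1)) = 6 ∧ G.edgeSet.ncard = n :=
    ⟨_, ⊤, htop, rfl⟩
  obtain ⟨G, hG6, hGcard⟩ := Nat.find_spec hex
  refine ⟨G, hG6, ?_⟩
  intro e he
  have hle : Harm G (fun x : {x // x ∈ V} => x.1) ≤ Harm (G.deleteEdges {e}) (fun x => x.1) :=
    harm_antitone (SimpleGraph.deleteEdges_le _) _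
  have h6le : 6 ≤ Module.finrank ℝ (Harm (G.deleteEdges {e}) (fun x : {x // x ∈ V} => x.1)) := by
    rw [← hG6]; exact Submodule.finrank_mono hle
  rcases lt_or_eq_of_le h6le with h | h
  · exact h
  exfalso
  have hcard' : (G.deleteEdges {e}).edgeSet.ncard < Nat.find hex := by
    rw [SimpleGraph.edgeSet_deleteEdges, ← hGcard]
    exact Set.ncard_diff_singleton_lt_of_mem he (Set.toFinite _)
  exact Nat.find_min hex hcard' ⟨_, h.symm, rfl⟩
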